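/- If 𝔄 is a model of φ = ∃z ∀x ∃y₁…∃y_n ψ over relational σ with z-witness a₀ of 1-type π₀, then the set Φ of 1-types realized in 𝔄 has the property: π₀ ∈ Φ, and for every π ∈ Φ there exists a π-witness (𝔠,f) for π₀ and ψ such that every element of 𝔠 realizes a 1-type in Φ. -/

import Mathlib

open FirstOrder Language Structure

/-- The 1-type realized by `a`. -/
def tp {L : FirstOrder.Language} {M : Type*} [L.Structure M] (a : M) :
    ∀ n, L.Relations n → Prop :=
  fun _ R => RelMap R (fun _ => a)

/-!
The witness is the substructure of `M` induced on `{a₀, a, d₁, …, dₙ}`: being a substructure, it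
realizes `ψ` at these points because `ψ` is quantifier-free, and its elements have the same 1-types
as in `M`. It has at most `n + 2` elements; to reach exactly `n + 2` without creating new 1-types,
embed it into `Fin (n + 2)` and interpret each relation on `Fin (n + 2)` through a retraction
onto the substructure, so that every padding element is a copy of an old one.
-/

namespace FirstOrder.Language

variable {L : Language}

theorem tp_map {M N F : Type*} [L.Structure M] [L.Structure N] [FunLike F M N]
    [L.StrongHomClass F M N] (f : F) (x : M) : tp (L := L) (f x) = tp x := by
  funext k R
  exact propext (StrongHomClass.map_rel f R fun _ => x)

theorem BoundedFormula.IsQF.realize_formula_embedding {α M N F : Type*} [L.Structure M]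
    [L.Structure N] [FunLike F M N] [EmbeddingLike F M N] [L.StrongHomClass F M N]
    {φ : L.Formula α} (hφ : φ.IsQF) (f : F) (v : α → M) :
    φ.Realize (f ∘ v) ↔ φ.Realize v := by
  have hxs : (f ∘ default : Fin 0 → N) = default := Subsingleton.elim _ _
  rw [Formula.Realize, Formula.Realize, ← hφ.realize_embedding f, hxs]

variable [L.IsRelational]

abbrev comapStructure {C M : Type*} [L.Structure M] (h : C → M) : L.Structure C where
  funMap f := isEmptyElim f
  RelMap R w := RelMap R (h ∘ w)

def embeddingOfLeftInverse {C M : Type*} [L.Structure M] {h : C → M} {e : M → C}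
    (he : Function.LeftInverse h e) : @Embedding L M C _ (comapStructure h) :=
  letI := comapStructure (L := L) h
  { toFun := e
    inj' := he.injective
    map_fun' := fun f => isEmptyElim f
    map_rel' := fun R w => by
      change RelMap R (h ∘ e ∘ w) ↔ RelMap R w
      rw [← Function.comp_assoc, he.comp_eq_id, Function.id_comp] }

theorem exists_fin_extension_realizing_same_types (S : Type*) [L.Structure S] [Finite S]
    [Nonempty S] {m : ℕ} (hm : Nat.card S ≤ m) :
    ∃ (_ : L.Structure (Fin m)) (_ : S ↪[L] Fin m),
      ∀ i : Fin m, ∃ s : S, tp (L := L) i = tp (L := L) s := by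
  let e : S ↪ Fin m := (Finite.equivFin S).toEmbedding.trans (Fin.castLEEmb hm)
  let r : Fin m → S := Function.invFun e
  let := comapStructure (L := L) r
  exact ⟨_, embeddingOfLeftInverse (Function.leftInverse_invFun e.injective),
    fun i => ⟨r i, rfl⟩⟩

end FirstOrder.Language

theorem realized_types_closed_general (L : FirstOrder.Language) [L.IsRelational]
    (n : ℕ)
    (ψ : L.Formula (Fin (n + 2))) (hψ : ψ.IsQF)
    (M : Type*) [L.Structure M] (a₀ : M)
    (hM : ∀ x : M, ∃ d : Fin n → M, ψ.Realize (Fin.cons a₀ (Fin.cons x d))) :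
    tp (L := L) a₀ ∈ {t | ∃ a : M, tp (L := L) a = t} ∧
    ∀ π ∈ {t | ∃ a : M, tp (L := L) a = t},
      ∃ (C : Type) (_ : L.Structure C) (_ : Fintype C),
        Fintype.card C = n + 2 ∧
        ∃ (cz cx : C) (cy : Fin n → C),
          tp (L := L) cz = tp (L := L) a₀ ∧ tp (L := L) cx = π ∧
          ψ.Realize (Fin.cons cz (Fin.cons cx cy)) ∧
          ∀ c : C, tp (L := L) c ∈ {t | ∃ a : M, tp (L := L) a = t} := by
  refine ⟨⟨a₀, rfl⟩, ?_⟩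
  rintro _ ⟨a, rfl⟩
  obtain ⟨d, hd⟩ := hM a
  set g : Fin (n + 2) → M := Fin.cons a₀ (Fin.cons a d)
  let S := Substructure.closure L (Set.range g)
  let s : Fin (n + 2) → S := fun i => ⟨g i, Substructure.subset_closure (Set.mem_range_self i)⟩
  have hs : Function.Surjective s := by
    rintro ⟨x, hx⟩
    obtain ⟨i, rfl⟩ := (Substructure.mem_closure_iff_of_isRelational L _ x).1 hx
    exact ⟨i, rfl⟩
  have : Finite S := Finite.of_surjective s hs
  have : Nonempty S := ⟨s 0⟩
  have tp_coe (x : S) : tp (L := L) x = tp (x : M) := (tp_map S.subtype x).symm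
  obtain ⟨instC, e, he⟩ := exists_fin_extension_realizing_same_types (L := L) S
    ((Nat.card_le_card_of_surjective s hs).trans_eq (Nat.card_fin _))
  have hcons : Fin.cons (e (s 0)) (Fin.cons (e (s 1)) fun i => e (s i.succ.succ)) = e ∘ s := by
    funext i
    exact Fin.cases rfl (Fin.cases rfl fun _ => rfl) i
  refine ⟨Fin (n + 2), instC, inferInstance, Fintype.card_fin _, e (s 0), e (s 1),
    fun i => e (s i.succ.succ), by rw [tp_map, tp_coe]; rfl, by rw [tp_map, tp_coe]; rfl, ?_,
    fun i => ?_⟩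
  · rw [hcons, hψ.realize_formula_embedding, ← hψ.realize_formula_embedding S.subtype]
    exact hd
  · obtain ⟨x, hx⟩ := he i
    exact ⟨x, by rw [hx, tp_coe]⟩

/-- If `𝔄` is a model of `∃z ∀x ∃ȳ ψ` with `z`-witness `a₀` of 1-type `π₀`, then the
set `Φ` of 1-types realized in `𝔄` contains `π₀`, and for every `π ∈ Φ` there is a
`π`-witness for `π₀` and `ψ` (a structure of size `n+2` with designated elements of
types `π₀` and `π` satisfying `ψ`) all of whose elements realize 1-types in `Φ`. -/
theorem realized_types_closed (L : FirstOrder.Language) [L.IsRelational]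
    [∀ k, Fintype (L.Relations k)] (n : ℕ)
    (ψ : L.Formula (Fin (n + 2))) (hψ : ψ.IsQF)
    (M : Type*) [L.Structure M] (a₀ : M)
    (hM : ∀ x : M, ∃ d : Fin n → M, ψ.Realize (Fin.cons a₀ (Fin.cons x d))) :
    tp (L := L) a₀ ∈ {t | ∃ a : M, tp (L := L) a = t} ∧
    ∀ π ∈ {t | ∃ a : M, tp (L := L) a = t},
      ∃ (C : Type) (_ : L.Structure C) (_ : Fintype C),
        Fintype.card C = n + 2 ∧
        ∃ (cz cx : C) (cy : Fin n → C),
          tp (L := L) cz = tp (L := L) a₀ ∧ tp (L := L) cx = π ∧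
          ψ.Realize (Fin.cons cz (Fin.cons cx cy)) ∧
          ∀ c : C, tp (L := L) c ∈ {t | ∃ a : M, tp (L := L) a = t} :=
  realized_types_closed_general L n ψ hψ M a₀ hM
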